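/- Under the preconditioner setup, if μ > ‖ℰ‖₂, then κ( P̂^{-1/2} (A + μI) P̂^{-1/2} ) ≤ 1 + (λ̂_k + ‖E‖₂ + 2‖ℰ‖₂)/(μ − ‖ℰ‖₂). -/

import Mathlib

open Matrix

/-- The spectral norm (largest singular value) of a real matrix,
as the `ℓ²→ℓ²` operator norm. -/
noncomputable def specNorm2 {m n : ℕ} (M : Matrix (Fin m) (Fin n) ℝ) : ℝ :=
  ‖LinearMap.toContinuousLinearMap (Matrix.toEuclideanLin M)‖

/-- The largest eigenvalue of a real symmetric matrix, as the supremum of the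
Rayleigh quotient over the unit sphere. -/
noncomputable def lmax {n : ℕ} (M : Matrix (Fin n) (Fin n) ℝ) : ℝ :=
  ⨆ x : Metric.sphere (0 : EuclideanSpace ℝ (Fin n)) 1,
    (inner ℝ (x : EuclideanSpace ℝ (Fin n))
      (Matrix.toEuclideanLin M (x : EuclideanSpace ℝ (Fin n))) : ℝ)

/-- The smallest eigenvalue of a real symmetric matrix, as the infimum of the
Rayleigh quotient over the unit sphere. -/
noncomputable def lmin {n : ℕ} (M : Matrix (Fin n) (Fin n) ℝ) : ℝ :=
  ⨅ x : Metric.sphere (0 : EuclideanSpace ℝ (Fin n)) 1,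
    (inner ℝ (x : EuclideanSpace ℝ (Fin n))
      (Matrix.toEuclideanLin M (x : EuclideanSpace ℝ (Fin n))) : ℝ)

open scoped ComplexOrder in
/-- The positive semidefinite square root of a positive semidefinite matrix
(the definition `Matrix.PosSemidef.sqrt` of the older Mathlib, since removed). -/
noncomputable def Matrix.PosSemidef.sqrt {n : Type*} [Fintype n] {𝕜 : Type*} [RCLike 𝕜]
    [DecidableEq n] {A : Matrix n n 𝕜} (hA : A.PosSemidef) : Matrix n n 𝕜 :=
  hA.1.eigenvectorUnitary.1 * diagonal ((↑) ∘ (√·) ∘ hA.1.eigenvalues) *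
  (star hA.1.eigenvectorUnitary : Matrix n n 𝕜)

/-!
With `P = U Uᵀ`, the matrices `a • (1 - P) + U (diagonal f) Uᵀ` multiply componentwise
in `(a, f)`. The preconditioner `P̂⁻¹`, the matrix `Â_N + μ I` and
`T = (1 - P) + U (diagonal √d) Uᵀ`, with `d i = (λ̂_k + μ) / (λ̂_i + μ)`, are all of this
form; hence `T = P̂^{-1/2}`, and `T (Â_N + μ I) T = μ (1 - P) + (λ̂_k + μ) P` lies between
`μ I` and `(μ + λ̂_k) I`. As `0 ≤ d ≤ 1`, `T` is a contraction, so on the unit sphere the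
quadratic forms of `T E T` and `T ℰ T` lie in `[0, ‖E‖₂]` and `[-‖ℰ‖₂, ‖ℰ‖₂]`. The Rayleigh
quotients of `T (A + μ I) T` thus lie in `[μ - ‖ℰ‖₂, μ + λ̂_k + ‖E‖₂ + ‖ℰ‖₂]`, and the ratio
of these endpoints is the claimed bound.
-/

open scoped MatrixOrder

lemma Matrix.PosSemidef.sqrt_eq_of_sq_eq {ι : Type*} [Fintype ι] [DecidableEq ι]
    {P T : Matrix ι ι ℝ} (hP : P.PosSemidef) (hT : T.PosSemidef) (h : T ^ 2 = P) :
    hP.sqrt = T := by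
  have hcfc : hP.sqrt = cfc Real.sqrt P := by
    rw [hP.1.cfc_eq, Matrix.IsHermitian.cfc]
    rfl
  have hunique : CFC.sqrt P = T := CFC.sqrt_unique (by rw [← h, sq]) hT.nonneg
  rw [hcfc, ← cfcₙ_eq_cfc (hf0 := by simp), ← CFC.sqrt_eq_real_sqrt P hP.nonneg, hunique]

section RangeDiagonal

variable {m κ : Type*} [Fintype m] [Fintype κ] [DecidableEq m] [DecidableEq κ]

noncomputable def rangeDiagonal (U : Matrix m κ ℝ) (a : ℝ) (f : κ → ℝ) : Matrix m m ℝ :=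
  a • (1 - U * Uᵀ) + U * diagonal f * Uᵀ

variable {U : Matrix m κ ℝ}

omit [Fintype m] in
lemma rangeDiagonal_sub (a b : ℝ) (f g : κ → ℝ) :
    rangeDiagonal U a f - rangeDiagonal U b g = rangeDiagonal U (a - b) (f - g) := by
  rw [rangeDiagonal, rangeDiagonal, rangeDiagonal, sub_smul,
    show f - g = fun i => f i - g i from rfl, ← diagonal_sub, Matrix.mul_sub, Matrix.sub_mul]
  abel

omit [Fintype m] in
lemma smul_one_eq_rangeDiagonal (a : ℝ) :
    a • (1 : Matrix m m ℝ) = rangeDiagonal U a (fun _ => a) := by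
  rw [rangeDiagonal, ← smul_one_eq_diagonal, Matrix.mul_smul, Matrix.smul_mul, Matrix.mul_one,
    smul_sub, sub_add_cancel]

omit [DecidableEq m] in
lemma mul_mul_transpose_mul_mul_mul_transpose (hU : Uᵀ * U = 1) (D D' : Matrix κ κ ℝ) :
    U * D * Uᵀ * (U * D' * Uᵀ) = U * (D * D') * Uᵀ := by
  simp only [Matrix.mul_assoc, ← Matrix.mul_assoc Uᵀ U, hU, Matrix.one_mul]

lemma one_sub_mul_transpose_mul_self (hU : Uᵀ * U = 1) :
    (1 - U * Uᵀ) * (1 - U * Uᵀ) = 1 - U * Uᵀ := by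
  have h := mul_mul_transpose_mul_mul_mul_transpose hU 1 1
  simp only [Matrix.mul_one] at h
  rw [Matrix.mul_sub, Matrix.sub_mul, Matrix.sub_mul, h]
  simp

lemma rangeDiagonal_mul_rangeDiagonal (hU : Uᵀ * U = 1) (a b : ℝ) (f g : κ → ℝ) :
    rangeDiagonal U a f * rangeDiagonal U b g = rangeDiagonal U (a * b) (f * g) := by
  have hP := mul_mul_transpose_mul_mul_mul_transpose hU 1
  simp only [Matrix.mul_one, Matrix.one_mul] at hP
  have hP' := fun D => mul_mul_transpose_mul_mul_mul_transpose hU D 1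
  simp only [Matrix.mul_one] at hP'
  have hQX (D : Matrix κ κ ℝ) : (1 - U * Uᵀ) * (U * D * Uᵀ) = 0 := by
    rw [Matrix.sub_mul, hP, Matrix.one_mul, sub_self]
  have hXQ (D : Matrix κ κ ℝ) : U * D * Uᵀ * (1 - U * Uᵀ) = 0 := by
    rw [Matrix.mul_sub, hP', Matrix.mul_one, sub_self]
  simp only [rangeDiagonal, Matrix.mul_add, Matrix.add_mul, Matrix.smul_mul, Matrix.mul_smul,
    one_sub_mul_transpose_mul_self hU, hQX, hXQ, mul_mul_transpose_mul_mul_mul_transpose hU,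
    diagonal_mul_diagonal, smul_smul, smul_zero, add_zero, zero_add, mul_comm b]
  rfl

lemma one_sub_mul_transpose_posSemidef (hU : Uᵀ * U = 1) : (1 - U * Uᵀ).PosSemidef := by
  have h := posSemidef_self_mul_conjTranspose (1 - U * Uᵀ)
  rwa [conjTranspose_eq_transpose_of_trivial, transpose_sub, transpose_one, transpose_mul,
    transpose_transpose, one_sub_mul_transpose_mul_self hU] at h

lemma rangeDiagonal_posSemidef (hU : Uᵀ * U = 1) {a : ℝ} {f : κ → ℝ} (ha : 0 ≤ a)
    (hf : 0 ≤ f) : (rangeDiagonal U a f).PosSemidef := by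
  refine ((one_sub_mul_transpose_posSemidef hU).smul ha).add ?_
  simpa using (PosSemidef.diagonal hf).mul_mul_conjTranspose_same U

lemma rangeDiagonal_mono (hU : Uᵀ * U = 1) {a b : ℝ} {f g : κ → ℝ} (hab : a ≤ b)
    (hfg : f ≤ g) : rangeDiagonal U a f ≤ rangeDiagonal U b g := by
  rw [Matrix.le_iff, rangeDiagonal_sub]
  exact rangeDiagonal_posSemidef hU (sub_nonneg.2 hab) (sub_nonneg.2 hfg)

end RangeDiagonal

section Rayleigh

variable {n : ℕ}

lemma inner_toEuclideanLin_nonneg {M : Matrix (Fin n) (Fin n) ℝ} (hM : M.PosSemidef)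
    (x : EuclideanSpace ℝ (Fin n)) : 0 ≤ inner ℝ x (toEuclideanLin M x) :=
  (isPositive_toEuclideanLin_iff.2 hM).inner_nonneg_right x

lemma inner_toEuclideanLin_mono {M N : Matrix (Fin n) (Fin n) ℝ} (h : M ≤ N)
    (x : EuclideanSpace ℝ (Fin n)) :
    inner ℝ x (toEuclideanLin M x) ≤ inner ℝ x (toEuclideanLin N x) := by
  have := inner_toEuclideanLin_nonneg (Matrix.le_iff.1 h) x
  rwa [map_sub, LinearMap.sub_apply, inner_sub_right, sub_nonneg] at this

lemma inner_toEuclideanLin_smul_one (a : ℝ) (x : EuclideanSpace ℝ (Fin n)) :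
    inner ℝ x (toEuclideanLin (a • 1 : Matrix (Fin n) (Fin n) ℝ) x) = a * ‖x‖ ^ 2 := by
  simp [inner_smul_right]

lemma abs_inner_toEuclideanLin_le (M : Matrix (Fin n) (Fin n) ℝ)
    (x : EuclideanSpace ℝ (Fin n)) :
    |inner ℝ x (toEuclideanLin M x)| ≤ specNorm2 M * ‖x‖ ^ 2 :=
  calc |inner ℝ x (toEuclideanLin M x)| ≤ ‖x‖ * ‖toEuclideanLin M x‖ :=
        abs_real_inner_le_norm _ _
    _ ≤ ‖x‖ * (specNorm2 M * ‖x‖) := by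
        gcongr
        exact (LinearMap.toContinuousLinearMap (toEuclideanLin M)).le_opNorm x
    _ = specNorm2 M * ‖x‖ ^ 2 := by ring

lemma inner_toEuclideanLin_mul_mul_self {T : Matrix (Fin n) (Fin n) ℝ} (hT : T.IsHermitian)
    (B : Matrix (Fin n) (Fin n) ℝ) (x : EuclideanSpace ℝ (Fin n)) :
    inner ℝ x (toEuclideanLin (T * B * T) x)
      = inner ℝ (toEuclideanLin T x) (toEuclideanLin B (toEuclideanLin T x)) := by
  simp only [toLpLin_mul_same, LinearMap.comp_apply]
  exact ((isSymmetric_toEuclideanLin_iff.2 hT) _ _).symm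

lemma norm_toEuclideanLin_le_of_mul_self_le_one {T : Matrix (Fin n) (Fin n) ℝ}
    (hT : T.IsHermitian) (hTT : T * T ≤ 1) (x : EuclideanSpace ℝ (Fin n)) :
    ‖toEuclideanLin T x‖ ≤ ‖x‖ := by
  have h := inner_toEuclideanLin_mono hTT x
  rw [show T * T = T * 1 * T by rw [Matrix.mul_one], inner_toEuclideanLin_mul_mul_self hT,
    ← one_smul ℝ (1 : Matrix (Fin n) (Fin n) ℝ),
    inner_toEuclideanLin_smul_one, inner_toEuclideanLin_smul_one] at h
  nlinarith [norm_nonneg x, norm_nonneg (toEuclideanLin T x)]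

lemma inner_toEuclideanLin_add_conj_mem_Icc {Mid T E F : Matrix (Fin n) (Fin n) ℝ} {a b : ℝ}
    (ha : a • 1 ≤ Mid) (hb : Mid ≤ b • 1) (hT : T.IsHermitian) (hTT : T * T ≤ 1)
    (hE : E.PosSemidef) {x : EuclideanSpace ℝ (Fin n)} (hx : ‖x‖ = 1) :
    inner ℝ x (toEuclideanLin (Mid + T * E * T + T * F * T) x)
      ∈ Set.Icc (a - specNorm2 F) (b + specNorm2 E + specNorm2 F) := by
  have hMid_lo := inner_toEuclideanLin_mono ha x
  have hMid_hi := inner_toEuclideanLin_mono hb x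
  rw [inner_toEuclideanLin_smul_one, hx] at hMid_lo hMid_hi
  set y := toEuclideanLin T x
  have hy : ‖y‖ ≤ 1 := hx ▸ norm_toEuclideanLin_le_of_mul_self_le_one hT hTT x
  have hy2 : ‖y‖ ^ 2 ≤ 1 := by nlinarith [norm_nonneg y]
  have hE_lo := inner_toEuclideanLin_nonneg hE y
  have hE_hi := (le_abs_self _).trans (abs_inner_toEuclideanLin_le E y)
  have hF := abs_le.1 (abs_inner_toEuclideanLin_le F y)
  have hEn : 0 ≤ specNorm2 E := norm_nonneg _
  have hFn : 0 ≤ specNorm2 F := norm_nonneg _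
  simp only [map_add, LinearMap.add_apply, inner_add_right]
  rw [inner_toEuclideanLin_mul_mul_self hT, inner_toEuclideanLin_mul_mul_self hT]
  constructor <;> nlinarith

variable [NeZero n]

instance : Nonempty (Metric.sphere (0 : EuclideanSpace ℝ (Fin n)) 1) :=
  (NormedSpace.sphere_nonempty.2 zero_le_one).to_subtype

lemma lmax_le {M : Matrix (Fin n) (Fin n) ℝ} {b : ℝ}
    (h : ∀ x : EuclideanSpace ℝ (Fin n), ‖x‖ = 1 →
      inner ℝ x (toEuclideanLin M x) ≤ b) :
    lmax M ≤ b :=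
  ciSup_le fun x => h x (mem_sphere_zero_iff_norm.1 x.2)

lemma le_lmin {M : Matrix (Fin n) (Fin n) ℝ} {a : ℝ}
    (h : ∀ x : EuclideanSpace ℝ (Fin n), ‖x‖ = 1 →
      a ≤ inner ℝ x (toEuclideanLin M x)) :
    a ≤ lmin M :=
  le_ciInf fun x => h x (mem_sphere_zero_iff_norm.1 x.2)

lemma lmax_div_lmin_le {M : Matrix (Fin n) (Fin n) ℝ} {a b : ℝ} (ha : 0 < a)
    (h : ∀ x : EuclideanSpace ℝ (Fin n), ‖x‖ = 1 →
      inner ℝ x (toEuclideanLin M x) ∈ Set.Icc a b) :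
    lmax M / lmin M ≤ b / a := by
  obtain ⟨x, hx⟩ := Classical.arbitrary (Metric.sphere (0 : EuclideanSpace ℝ (Fin n)) 1)
  have hab := Set.nonempty_Icc.1 ⟨_, h x (mem_sphere_zero_iff_norm.1 hx)⟩
  exact div_le_div₀ (ha.le.trans hab) (lmax_le fun x hx => (h x hx).2) ha
    (le_lmin fun x hx => (h x hx).1)

end Rayleigh

lemma div_add_mem_Icc {c x μ : ℝ} (hcx : c ≤ x) (hcμ : 0 < c + μ) :
    (c + μ) / (x + μ) ∈ Set.Icc 0 1 :=
  have hxμ : 0 < x + μ := by linarith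
  ⟨div_nonneg hcμ.le hxμ.le, (div_le_one hxμ).2 (by linarith)⟩

section Preconditioner

variable {m κ : Type*} [Fintype m] [Fintype κ] [DecidableEq m] [DecidableEq κ]
  {U : Matrix m κ ℝ}

omit [Fintype m] in
lemma mul_diagonal_mul_transpose_add_smul_one (f : κ → ℝ) (μ : ℝ) :
    U * diagonal f * Uᵀ + μ • 1 = rangeDiagonal U μ (fun i => f i + μ) := by
  rw [rangeDiagonal, ← diagonal_add f (fun _ => μ), Matrix.mul_add, Matrix.add_mul,
    ← smul_one_eq_diagonal, Matrix.mul_smul, Matrix.smul_mul, Matrix.mul_one, smul_sub]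
  abel

omit [Fintype m] in
lemma one_sub_add_smul_inv_eq_rangeDiagonal {f : κ → ℝ} {μ : ℝ} (hf : ∀ i, f i + μ ≠ 0)
    (s : ℝ) : 1 - U * Uᵀ + s • (U * (diagonal f + μ • 1)⁻¹ * Uᵀ)
      = rangeDiagonal U 1 (fun i => s / (f i + μ)) := by
  have hinv : (diagonal f + μ • 1)⁻¹ = diagonal (fun i => (f i + μ)⁻¹) := by
    refine inv_eq_right_inv ?_
    rw [smul_one_eq_diagonal, diagonal_add, diagonal_mul_diagonal, ← diagonal_one]
    exact congrArg diagonal (funext fun i => mul_inv_cancel₀ (hf i))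
  rw [rangeDiagonal, one_smul, hinv, ← Matrix.smul_mul, ← Matrix.mul_smul, ← diagonal_smul]
  rfl

lemma Matrix.PosSemidef.sqrt_eq_rangeDiagonal (hU : Uᵀ * U = 1) {P : Matrix m m ℝ}
    (hP : P.PosSemidef) {d : κ → ℝ} (hd : 0 ≤ d) (hPd : P = rangeDiagonal U 1 d) :
    hP.sqrt = rangeDiagonal U 1 (fun i => √(d i)) := by
  refine hP.sqrt_eq_of_sq_eq (rangeDiagonal_posSemidef hU zero_le_one
    fun i => Real.sqrt_nonneg _) ?_
  rw [sq, rangeDiagonal_mul_rangeDiagonal hU, one_mul, hPd]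
  congr 1
  funext i
  exact Real.mul_self_sqrt (hd i)

lemma smul_one_le_rangeDiagonal_const (hU : Uᵀ * U = 1) (μ : ℝ) {c : ℝ} (hc : 0 ≤ c) :
    μ • 1 ≤ rangeDiagonal U μ (fun _ => μ + c) := by
  rw [smul_one_eq_rangeDiagonal (U := U)]
  exact rangeDiagonal_mono hU le_rfl fun _ => by simpa using hc

lemma rangeDiagonal_const_le_smul_one (hU : Uᵀ * U = 1) {μ c : ℝ} (hc : 0 ≤ c) :
    rangeDiagonal U μ (fun _ => μ + c) ≤ (μ + c) • 1 := by
  rw [smul_one_eq_rangeDiagonal (U := U)]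
  exact rangeDiagonal_mono hU (by linarith) le_rfl

noncomputable def preconditionerSqrt (U : Matrix m κ ℝ) (f : κ → ℝ) (c μ : ℝ) :
    Matrix m m ℝ :=
  rangeDiagonal U 1 (fun i => √((c + μ) / (f i + μ)))

variable {f : κ → ℝ} {c μ : ℝ}

lemma sqrt_preconditioner_eq (hU : Uᵀ * U = 1) (hf : ∀ i, c ≤ f i) (hcμ : 0 < c + μ)
    (hP : (1 - U * Uᵀ + (c + μ) • (U * (diagonal f + μ • 1)⁻¹ * Uᵀ)).PosSemidef) :
    hP.sqrt = preconditionerSqrt U f c μ :=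
  hP.sqrt_eq_rangeDiagonal hU (fun i => (div_add_mem_Icc (hf i) hcμ).1)
    (one_sub_add_smul_inv_eq_rangeDiagonal (fun i => by linarith [hf i]) _)

lemma preconditionerSqrt_posSemidef (hU : Uᵀ * U = 1) :
    (preconditionerSqrt U f c μ).PosSemidef :=
  rangeDiagonal_posSemidef hU zero_le_one fun _ => Real.sqrt_nonneg _

lemma preconditionerSqrt_mul_self_le_one (hU : Uᵀ * U = 1) (hf : ∀ i, c ≤ f i)
    (hcμ : 0 < c + μ) : preconditionerSqrt U f c μ * preconditionerSqrt U f c μ ≤ 1 := by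
  rw [preconditionerSqrt, rangeDiagonal_mul_rangeDiagonal hU,
    ← one_smul ℝ (1 : Matrix m m ℝ), smul_one_eq_rangeDiagonal (U := U)]
  refine rangeDiagonal_mono hU (by norm_num) fun i => ?_
  simp only [Pi.mul_apply]
  rw [Real.mul_self_sqrt (div_add_mem_Icc (hf i) hcμ).1]
  exact (div_add_mem_Icc (hf i) hcμ).2

lemma preconditionerSqrt_conj (hU : Uᵀ * U = 1) (hf : ∀ i, c ≤ f i) (hcμ : 0 < c + μ) :
    preconditionerSqrt U f c μ * (U * diagonal f * Uᵀ + μ • 1) * preconditionerSqrt U f c μ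
      = rangeDiagonal U μ (fun _ => μ + c) := by
  rw [preconditionerSqrt, mul_diagonal_mul_transpose_add_smul_one,
    rangeDiagonal_mul_rangeDiagonal hU, rangeDiagonal_mul_rangeDiagonal hU, one_mul, mul_one]
  congr 1
  funext i
  simp only [Pi.mul_apply]
  rw [mul_right_comm, Real.mul_self_sqrt (div_add_mem_Icc (hf i) hcμ).1,
    div_mul_cancel₀ _ (by linarith [hf i]), add_comm]

end Preconditioner

/-- Preconditioner setup: `n > k ≥ 1`, `A` real symmetric with `A + μI` positive
definite (`μ ≥ 0`), `Û` with orthonormal columns (`ÛᵀÛ = I`),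
`Θ̂ = diag(λ̂_1,…,λ̂_k)` with `λ̂_1 ≥ … ≥ λ̂_k > 0`, `Â_N = Û Θ̂ Ûᵀ`,
`A = Â_N + E + ℰ` with `E, ℰ` symmetric and `E` positive semidefinite, and
`P̂⁻¹ = I − ÛÛᵀ + (λ̂_k + μ) Û (Θ̂ + μI)⁻¹ Ûᵀ`, which is symmetric positive definite;
`P̂^{-1/2}` is its positive semidefinite square root.
If `μ > ‖ℰ‖₂`, then `κ(P̂^{-1/2}(A + μI)P̂^{-1/2}) ≤ 1 + (λ̂_k + ‖E‖₂ + 2‖ℰ‖₂)/(μ − ‖ℰ‖₂)`. -/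
theorem stmt9 {n k : ℕ} (hk : 1 ≤ k) (hkn : k < n)
    (A : Matrix (Fin n) (Fin n) ℝ)
    (μ : ℝ) (hμ : 0 ≤ μ)
    (U : Matrix (Fin n) (Fin k) ℝ) (hU : Uᵀ * U = 1)
    (lamh : Fin k → ℝ) (hlamh : Antitone lamh) (hlamhk : 0 < lamh ⟨k - 1, by omega⟩)
    (E Err : Matrix (Fin n) (Fin n) ℝ)
    (hEpsd : E.PosSemidef)
    (hsum : A = U * Matrix.diagonal lamh * Uᵀ + E + Err)
    (hPinvPD : ((1 : Matrix (Fin n) (Fin n) ℝ) - U * Uᵀ +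
      (lamh ⟨k - 1, by omega⟩ + μ) • (U * (Matrix.diagonal lamh + μ • 1)⁻¹ * Uᵀ)).PosDef)
    (hμErr : specNorm2 Err < μ) :
    let S := hPinvPD.posSemidef.sqrt
    let M := S * (A + μ • 1) * S
    lmax M / lmin M ≤
      1 + (lamh ⟨k - 1, by omega⟩ + specNorm2 E + 2 * specNorm2 Err) /
        (μ - specNorm2 Err) := by
  intro S M
  have : NeZero n := ⟨by omega⟩
  set c := lamh ⟨k - 1, by omega⟩
  have hc_le (i : Fin k) : c ≤ lamh i := hlamh (Fin.le_def.2 (Nat.le_sub_one_of_lt i.2))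
  have hcμ : 0 < c + μ := by linarith
  have hS : S = preconditionerSqrt U lamh c μ := sqrt_preconditioner_eq hU hc_le hcμ _
  have hT := preconditionerSqrt_posSemidef (f := lamh) (c := c) (μ := μ) hU
  have hTT := preconditionerSqrt_mul_self_le_one hU hc_le hcμ
  have hconj := preconditionerSqrt_conj hU hc_le hcμ
  generalize preconditionerSqrt U lamh c μ = T at hS hT hTT hconj
  have hM : M = rangeDiagonal U μ (fun _ => μ + c) + T * E * T + T * Err * T := by
    rw [show M = T * (A + μ • 1) * T from hS ▸ rfl, hsum, ← hconj]
    noncomm_ring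
  calc lmax M / lmin M ≤ (μ + c + specNorm2 E + specNorm2 Err) / (μ - specNorm2 Err) :=
        lmax_div_lmin_le (by linarith) fun x hx => hM ▸
          inner_toEuclideanLin_add_conj_mem_Icc (smul_one_le_rangeDiagonal_const hU μ hlamhk.le)
            (rangeDiagonal_const_le_smul_one hU hlamhk.le) hT.1 hTT hEpsd hx
    _ = 1 + (c + specNorm2 E + 2 * specNorm2 Err) / (μ - specNorm2 Err) := by
        field_simp [(sub_pos.2 hμErr).ne']
        ring
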